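/- Let L be an n×n real matrix, K symmetric positive definite, A = L − λI, and K_N(λ) = K − K Aᵀ (A K Aᵀ)⁺ A K. Then the trace of K_N(λ) is strictly positive if and only if λ is an eigenvalue of L. -/

import Mathlib

/-!
Write `A = L - λ I`. If `A` is invertible then so is `A K Aᵀ`, its pseudoinverse `W` is its
inverse, and `K - K Aᵀ W A K = K - K Aᵀ A⁻ᵀ K⁻¹ A⁻¹ A K = 0`. In general `W` is symmetric with
`W (A K Aᵀ) W = W`, so `K - K Aᵀ W A K = S K Sᵀ` for `S = I - K Aᵀ W A`; this matrix is positive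
semidefinite, hence its trace is positive exactly when it is nonzero, and it is nonzero as soon as
`A v = 0` for some `v ≠ 0`, because it maps `K⁻¹ v` to `v`.
-/

open Matrix Real

/-- The four Penrose conditions characterizing the Moore-Penrose pseudoinverse. -/
def IsMoorePenrose {m n : Type*} [Fintype m] [Fintype n]
    (Q : Matrix m n ℝ) (Qp : Matrix n m ℝ) : Prop :=
  Q * Qp * Q = Q ∧ Qp * Q * Qp = Qp ∧ (Q * Qp)ᵀ = Q * Qp ∧ (Qp * Q)ᵀ = Qp * Q

namespace IsMoorePenrose

variable {m n : Type*} [Fintype m] [Fintype n] {Q : Matrix m n ℝ} {Qp Qp' : Matrix n m ℝ}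

theorem transpose (h : IsMoorePenrose Q Qp) : IsMoorePenrose Qᵀ Qpᵀ := by
  obtain ⟨h₁, h₂, h₃, h₄⟩ := h
  refine ⟨?_, ?_, ?_, ?_⟩
  · simpa only [transpose_mul, Matrix.mul_assoc] using congrArg Matrix.transpose h₁
  · simpa only [transpose_mul, Matrix.mul_assoc] using congrArg Matrix.transpose h₂
  · rw [← transpose_mul, h₄, h₄]
  · rw [← transpose_mul, h₃, h₃]

theorem unique (h : IsMoorePenrose Q Qp) (h' : IsMoorePenrose Q Qp') : Qp = Qp' := by
  obtain ⟨h₁, h₂, h₃, h₄⟩ := h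
  obtain ⟨h₁', h₂', h₃', h₄'⟩ := h'
  have hQQp : Q * Qp = Q * Qp' :=
    calc Q * Qp = (Q * Qp' * Q * Qp)ᵀ := by rw [h₁', h₃]
      _ = (Q * Qp)ᵀ * (Q * Qp')ᵀ := by rw [← transpose_mul]; simp only [Matrix.mul_assoc]
      _ = Q * Qp * Q * Qp' := by rw [h₃, h₃']; simp only [Matrix.mul_assoc]
      _ = Q * Qp' := by rw [h₁]
  have hQpQ : Qp * Q = Qp' * Q :=
    calc Qp * Q = (Qp * (Q * Qp' * Q))ᵀ := by rw [h₁', h₄]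
      _ = (Qp' * Q)ᵀ * (Qp * Q)ᵀ := by rw [← transpose_mul]; simp only [Matrix.mul_assoc]
      _ = Qp' * (Q * Qp * Q) := by rw [h₄, h₄']; simp only [Matrix.mul_assoc]
      _ = Qp' * Q := by rw [h₁]
  calc Qp = Qp * Q * Qp := h₂.symm
    _ = Qp' * Q * Qp' := by rw [Matrix.mul_assoc, hQQp, ← Matrix.mul_assoc, hQpQ]
    _ = Qp' := h₂'

theorem isSymm {Q Qp : Matrix n n ℝ} (hQ : Q.IsSymm) (h : IsMoorePenrose Q Qp) : Qp.IsSymm := by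
  have hT := h.transpose
  rw [hQ.eq] at hT
  exact hT.unique h

theorem eq_nonsing_inv [DecidableEq n] {Q Qp : Matrix n n ℝ} (hQ : IsUnit Q.det)
    (h : IsMoorePenrose Q Qp) : Qp = Q⁻¹ :=
  calc Qp = Q⁻¹ * Q * Qp * (Q * Q⁻¹) := by
        rw [nonsing_inv_mul _ hQ, mul_nonsing_inv _ hQ, Matrix.one_mul, Matrix.mul_one]
    _ = Q⁻¹ * (Q * Qp * Q) * Q⁻¹ := by simp only [Matrix.mul_assoc]
    _ = Q⁻¹ := by rw [h.1, nonsing_inv_mul _ hQ, Matrix.one_mul]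

end IsMoorePenrose

open scoped ComplexOrder in
theorem Matrix.PosSemidef.trace_pos_iff {n 𝕜 : Type*} [Fintype n] [RCLike 𝕜] {M : Matrix n n 𝕜}
    (hM : M.PosSemidef) : 0 < M.trace ↔ M ≠ 0 := by
  rw [hM.trace_nonneg.lt_iff_ne', Ne, hM.trace_eq_zero_iff]

/-- With `W = (A K Aᵀ)⁺` this is the covariance of a centred Gaussian vector with covariance `K`
conditioned on `A x = 0`; for `A = L - λ I` it is the matrix `K_N(λ)`. -/
def conditionalCov {m n : Type*} [Fintype m] [Fintype n]
    (K : Matrix n n ℝ) (A : Matrix m n ℝ) (W : Matrix m m ℝ) : Matrix n n ℝ :=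
  K - K * Aᵀ * W * A * K

section conditionalCov

variable {m n : Type*} [Fintype m] [Fintype n] [DecidableEq n]
  {K : Matrix n n ℝ} {A : Matrix m n ℝ} {W : Matrix m m ℝ}

theorem conditionalCov_eq_mul_mul_transpose (hK : K.IsSymm) (hW : W.IsSymm)
    (hWMW : W * (A * K * Aᵀ) * W = W) :
    conditionalCov K A W = (1 - K * Aᵀ * W * A) * K * (1 - K * Aᵀ * W * A)ᵀ := by
  have hcancel : K * Aᵀ * W * A * K * (Aᵀ * W * A * K) = K * Aᵀ * W * A * K := by
    calc K * Aᵀ * W * A * K * (Aᵀ * W * A * K) = K * Aᵀ * (W * (A * K * Aᵀ) * W) * A * K := by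
          simp only [Matrix.mul_assoc]
      _ = K * Aᵀ * W * A * K := by rw [hWMW]
  have hT : (1 - K * Aᵀ * W * A)ᵀ = 1 - Aᵀ * W * A * K := by
    simp only [transpose_sub, transpose_one, transpose_mul, transpose_transpose, hK.eq, hW.eq,
      Matrix.mul_assoc]
  rw [conditionalCov, hT]
  simp only [Matrix.sub_mul, Matrix.mul_sub, Matrix.one_mul, Matrix.mul_one, hcancel]
  simp only [Matrix.mul_assoc]
  abel

theorem conditionalCov_posSemidef (hK : K.PosSemidef) (hW : IsMoorePenrose (A * K * Aᵀ) W) :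
    (conditionalCov K A W).PosSemidef := by
  have hKs : K.IsSymm := by simpa using hK.isHermitian
  have hWs : W.IsSymm :=
    hW.isSymm (by simp only [IsSymm, transpose_mul, transpose_transpose, hKs.eq, Matrix.mul_assoc])
  rw [conditionalCov_eq_mul_mul_transpose hKs hWs hW.2.1]
  simpa only [conjTranspose_eq_transpose_of_trivial] using hK.mul_mul_conjTranspose_same (1 - K * Aᵀ * W * A)

theorem conditionalCov_mulVec_inv_mulVec (hK : IsUnit K.det) {v : n → ℝ} (hv : A *ᵥ v = 0) :
    conditionalCov K A W *ᵥ (K⁻¹ *ᵥ v) = v := by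
  rw [conditionalCov, sub_mulVec, mulVec_mulVec, mulVec_mulVec, mul_nonsing_inv _ hK,
    mul_nonsing_inv_cancel_right _ _ hK, one_mulVec, ← mulVec_mulVec, hv, mulVec_zero, sub_zero]

theorem conditionalCov_nonsing_inv_eq_zero {A : Matrix n n ℝ} (hA : IsUnit A.det)
    (hK : IsUnit K.det) : conditionalCov K A (A * K * Aᵀ)⁻¹ = 0 := by
  have hAT : IsUnit Aᵀ.det := by rwa [det_transpose]
  calc conditionalCov K A (A * K * Aᵀ)⁻¹
      = K - K * (Aᵀ * Aᵀ⁻¹) * K⁻¹ * (A⁻¹ * A) * K := by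
        simp only [conditionalCov, Matrix.mul_inv_rev, Matrix.mul_assoc]
    _ = 0 := by
        rw [mul_nonsing_inv _ hAT, nonsing_inv_mul _ hA, Matrix.mul_one, Matrix.mul_one,
          mul_nonsing_inv _ hK, Matrix.one_mul, sub_self]

end conditionalCov

theorem trace_pos_iff_eigenvalue {n : Type*} [Fintype n] [DecidableEq n]
    (L K W : Matrix n n ℝ) (lam : ℝ) (hK : K.PosDef)
    (hW : IsMoorePenrose ((L - lam • 1) * K * (L - lam • 1)ᵀ) W) :
    0 < (K - K * (L - lam • 1)ᵀ * W * (L - lam • 1) * K).trace ↔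
      ∃ v : n → ℝ, v ≠ 0 ∧ L *ᵥ v = lam • v := by
  set A := L - lam • 1
  have hKdet : IsUnit K.det := isUnit_iff_ne_zero.2 hK.det_pos.ne'
  have heig (v : n → ℝ) : L *ᵥ v = lam • v ↔ A *ᵥ v = 0 := by
    rw [sub_mulVec, smul_mulVec, one_mulVec, sub_eq_zero]
  change 0 < (conditionalCov K A W).trace ↔ _
  simp_rw [heig, (conditionalCov_posSemidef hK.posSemidef hW).trace_pos_iff]
  constructor
  · intro hne
    by_contra hker
    have hA : IsUnit A.det := isUnit_iff_ne_zero.2 (mt exists_mulVec_eq_zero_iff.2 hker)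
    have hM : IsUnit (A * K * Aᵀ).det := by
      rw [det_mul, det_mul, det_transpose]
      exact (hA.mul hKdet).mul hA
    exact hne (hW.eq_nonsing_inv hM ▸ conditionalCov_nonsing_inv_eq_zero hA hKdet)
  · rintro ⟨v, hv, hAv⟩ hzero
    apply hv
    rw [← conditionalCov_mulVec_inv_mulVec hKdet hAv, hzero, zero_mulVec]
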